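/- arXiv:2504.00153 — 2 statements merged into one kernel-verified Lean document; each statement's English description precedes it below -/
import Mathlib

section
/- The shift graph G(n, 2) — with vertex set the pairs (i, j), 1 ≤ i < j ≤ n, where (i, j) and (j, k) are adjacent for all i < j < k — has chromatic number ⌈log₂ n⌉. -/
open SimpleGraph

/-!
A proper coloring `C` of the shift graph on a linear order `α` makes `i ↦ C '' {(i, j) | i < j}`
injective: for `i < j` the color of `(i, j)` lies in the image at `i` but not in the image at `j`,
since every `(j, k)` is adjacent to `(i, j)`. Hence `|α| ≤ 2 ^ c`. Conversely, coloring `(i, j)`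
by a binary digit that is `0` in `i` and `1` in `j` is proper, as that digit cannot be both `1`
and `0` in the middle vertex `j` of a path `(i, j), (j, k)`.
-/

theorem Nat.exists_testBit_false_true_of_lt {m n : ℕ} (h : m < n) :
    ∃ b, m.testBit b = false ∧ n.testBit b = true := by
  by_contra! hmn
  exact h.not_ge (Nat.le_of_testBit fun b hb => by simpa using mt (hmn b) (by simpa))

namespace SimpleGraph

def shiftGraph (α : Type*) [Preorder α] : SimpleGraph {p : α × α // p.1 < p.2} where
  Adj a b := a.1.2 = b.1.1 ∨ b.1.2 = a.1.1
  symm := ⟨fun _ _ => Or.symm⟩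
  loopless := ⟨fun a h => h.elim (fun h => (h ▸ a.2).false) (fun h => (h ▸ a.2).false)⟩

namespace shiftGraph

variable {α β : Type*}

theorem injective_image_fst_eq [LinearOrder α] (C : (shiftGraph α).Coloring β) :
    Function.Injective fun i : α => C '' {v | v.1.1 = i} := by
  refine .of_lt_imp_ne fun i j hij hCij => ?_
  obtain ⟨w, hwj, hw⟩ : C ⟨(i, j), hij⟩ ∈ C '' {v | v.1.1 = j} :=
    hCij ▸ ⟨_, rfl, rfl⟩
  exact C.valid (Or.inl hwj.symm) hw.symm

theorem card_le_two_pow_of_colorable [LinearOrder α] [Fintype α] {c : ℕ}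
    (h : (shiftGraph α).Colorable c) : Fintype.card α ≤ 2 ^ c := by
  obtain ⟨C⟩ := h
  simpa using Fintype.card_le_of_injective _ (injective_image_fst_eq C)

theorem colorable_of_strictMono [Preorder α] {f : α → ℕ} (hf : StrictMono f) {c : ℕ}
    (hc : ∀ a, f a < 2 ^ c) : (shiftGraph α).Colorable c := by
  choose b hb₀ hb₁ using fun v : {p : α × α // p.1 < p.2} =>
    Nat.exists_testBit_false_true_of_lt (hf v.2)
  have hbc (v) : b v < c :=
    (Nat.pow_lt_pow_iff_right one_lt_two).1 ((Nat.ge_two_pow_of_testBit (hb₁ v)).trans_lt (hc _))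
  refine ⟨Coloring.mk (fun v => ⟨b v, hbc v⟩) fun {v w} hvw hb => ?_⟩
  replace hb : b v = b w := congrArg Fin.val hb
  rcases hvw with h | h
  · simpa [h, hb, hb₀ w] using hb₁ v
  · simpa [h, ← hb, hb₀ v] using hb₁ w

theorem chromaticNumber_eq_clog_card [LinearOrder α] [Fintype α] :
    (shiftGraph α).chromaticNumber = Nat.clog 2 (Fintype.card α) := by
  refine le_antisymm (chromaticNumber_le_iff_colorable.2 ?_) (le_chromaticNumber_iff_colorable.2 ?_)
  · let e := (Fintype.orderIsoFinOfCardEq α rfl).symm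
    exact colorable_of_strictMono (f := fun a => (e a : ℕ)) (Fin.val_strictMono.comp e.strictMono)
      fun a => (e a).2.trans_le (Nat.le_pow_clog one_lt_two _)
  · intro c hc
    exact Nat.cast_le.2 ((Nat.clog_le_iff_le_pow one_lt_two).2 (card_le_two_pow_of_colorable hc))

end shiftGraph

end SimpleGraph

/-- Erdős–Hajnal: the shift graph `G(n, 2)` — vertices are the pairs `(i, j)` with
`i < j` from an `n`-element set, `(i, j)` and `(j, k)` adjacent for all `i < j < k` —
has chromatic number `⌈log₂ n⌉`. -/
theorem shift_graph_two_chromaticNumber (n : ℕ)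
    (G : SimpleGraph {p : Fin n × Fin n // p.1 < p.2})
    (hG : ∀ a b : {p : Fin n × Fin n // p.1 < p.2},
      G.Adj a b ↔ (a.val.2 = b.val.1 ∨ b.val.2 = a.val.1)) :
    G.chromaticNumber = (Nat.clog 2 n : ℕ∞) := by
  obtain rfl : G = shiftGraph (Fin n) := by ext a b; exact hG a b
  simpa using shiftGraph.chromaticNumber_eq_clog_card (α := Fin n)
end

section
/- Every graph of the form C(T) for a Burling tree (T, r, l, c) is strongly chordal; in particular, every induced subgraph of C(T) contains a simple vertex (a vertex v such that the closed neighborhoods of vertices in N[v] are totally ordered by inclusion). -/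
/-- A Burling tree: a finite rooted tree (encoded by a parent function) together with a
last-born function `lastBorn` choosing a child of every non-leaf, and a choose function
`choose` associating to every non-last-born non-root vertex `v` the vertex set of a
(possibly empty) branch (descending path) starting at the last-born of the parent of
`v`, and `∅` to the root and to last-born vertices. -/
structure BurlingTree (V : Type*) where
  root : V
  parent : V → V
  parent_root : parent root = root
  parent_eq_self : ∀ v : V, parent v = v → v = root
  reaches_root : ∀ v : V, ∃ m : ℕ, parent^[m] v = root
  lastBorn : V → V
  lastBorn_spec : ∀ x : V, (∃ u : V, u ≠ x ∧ parent u = x) →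
    lastBorn x ≠ x ∧ parent (lastBorn x) = x
  choose : V → Set V
  choose_empty : ∀ v : V, (v = root ∨ v = lastBorn (parent v)) → choose v = ∅
  choose_branch : ∀ v : V, v ≠ root → v ≠ lastBorn (parent v) →
    ∃ L : List V, (L = [] ∨ L.head? = some (lastBorn (parent v))) ∧
      List.Chain' (fun a b => parent b = a) L ∧ choose v = {w | w ∈ L}

namespace BurlingTree

variable {V : Type*} (T : BurlingTree V)

/-- `u` is an ancestor of `v`: `u` lies on the path from `v` to the root. -/
def Ancestor (u v : V) : Prop := ∃ m : ℕ, T.parent^[m] v = u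

/-- `C(T)`: the graph obtained from the fully derived graph `G(T)` of a Burling tree by
making the vertex set of every principal branch (root-to-leaf path) a clique: distinct
`u, v` are adjacent iff one is chosen by the other or one is an ancestor of the other. -/
def CT : SimpleGraph V :=
  SimpleGraph.fromRel (fun u v =>
    v ∈ T.choose u ∨ u ∈ T.choose v ∨ T.Ancestor u v ∨ T.Ancestor v u)

/-- The closed neighborhood of `x` inside the induced subgraph of `C(T)` on `S`. -/
def closedNbhdIn (S : Set V) (x : V) : Set V :=
  {w ∈ S | w = x ∨ (T.CT).Adj x w}

end BurlingTree

/-!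
Rank the vertices by `2 * depth v + [v is a last-born]`; the rank strictly increases both from a
vertex to the vertices it chooses and from a vertex to its proper descendants. In a finite `S`,
let `v` have maximal rank among the vertices of `S` chosen by no vertex of `S`. Then `v` has no
proper descendant in `S`: one of least rank would be chosen by some `u ∈ S`, and as `u` does not
choose `v`, the vertex `u` is a proper descendant of `v` of smaller rank. Hence `N_S[v]` consists
of ancestors of `v` and of vertices chosen by `v`; apart from `v` they lie on one root-to-leaf
path, and each has a closed neighborhood containing `N_S[v]`. Since closed neighborhoods only grow
towards the root, the closed neighborhoods of the vertices of `N_S[v]` form a chain.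
-/

namespace BurlingTree

variable {V : Type*} (T : BurlingTree V)

section Depth

open Classical in
noncomputable def depth (v : V) : ℕ := Nat.find (T.reaches_root v)

variable {T}

theorem iterate_parent_eq_root_iff {v : V} {m : ℕ} :
    T.parent^[m] v = T.root ↔ T.depth v ≤ m := by
  classical
  rw [depth, Nat.find_le_iff]
  refine ⟨fun h => ⟨m, le_rfl, h⟩, fun ⟨k, hkm, hk⟩ => ?_⟩
  rw [← Nat.sub_add_cancel hkm, Function.iterate_add_apply, hk,
    Function.iterate_fixed T.parent_root]

theorem depth_eq_zero_iff {v : V} : T.depth v = 0 ↔ v = T.root := by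
  rw [← Nat.le_zero, ← iterate_parent_eq_root_iff, Function.iterate_zero_apply]

theorem depth_iterate_parent (v : V) (m : ℕ) :
    T.depth (T.parent^[m] v) = T.depth v - m :=
  eq_of_forall_ge_iff fun k => by
    rw [← iterate_parent_eq_root_iff, ← Function.iterate_add_apply,
      iterate_parent_eq_root_iff, Nat.sub_le_iff_le_add]

theorem depth_parent {v : V} (hv : v ≠ T.root) : T.depth (T.parent v) + 1 = T.depth v := by
  have hpos : T.depth v ≠ 0 := fun h => hv (depth_eq_zero_iff.mp h)
  have h := depth_iterate_parent (T := T) v 1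
  rw [Function.iterate_one] at h
  omega

end Depth

section Ancestor

variable {T} {u v w x : V}

theorem Ancestor.refl (v : V) : T.Ancestor v v := ⟨0, rfl⟩

theorem Ancestor.trans (huv : T.Ancestor u v) (hvw : T.Ancestor v w) : T.Ancestor u w := by
  obtain ⟨m, rfl⟩ := huv
  obtain ⟨k, rfl⟩ := hvw
  exact ⟨m + k, Function.iterate_add_apply _ _ _ _⟩

theorem ancestor_parent (v : V) : T.Ancestor (T.parent v) v := ⟨1, rfl⟩

theorem Ancestor.of_parent (h : T.Ancestor u (T.parent v)) : T.Ancestor u v :=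
  h.trans (ancestor_parent v)

theorem Ancestor.eq_or_ancestor_parent (h : T.Ancestor u v) :
    u = v ∨ T.Ancestor u (T.parent v) := by
  obtain ⟨_ | m, rfl⟩ := h
  · exact Or.inl rfl
  · exact Or.inr ⟨m, (Function.iterate_succ_apply _ _ _).symm⟩

theorem Ancestor.total (hu : T.Ancestor u w) (hv : T.Ancestor v w) :
    T.Ancestor u v ∨ T.Ancestor v u := by
  obtain ⟨m, rfl⟩ := hu
  obtain ⟨k, rfl⟩ := hv
  rcases le_total m k with hmk | hkm
  · refine Or.inr ⟨k - m, ?_⟩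
    rw [← Function.iterate_add_apply, Nat.sub_add_cancel hmk]
  · refine Or.inl ⟨m - k, ?_⟩
    rw [← Function.iterate_add_apply, Nat.sub_add_cancel hkm]

theorem Ancestor.depth_le (h : T.Ancestor u v) : T.depth u ≤ T.depth v := by
  obtain ⟨m, rfl⟩ := h
  rw [depth_iterate_parent]
  exact Nat.sub_le _ _

theorem Ancestor.eq_of_depth_eq (h : T.Ancestor u v) (hd : T.depth u = T.depth v) : u = v := by
  obtain ⟨m, rfl⟩ := h
  rw [depth_iterate_parent] at hd
  rcases Nat.eq_zero_or_pos m with rfl | hm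
  · rfl
  · have hv : v = T.root := depth_eq_zero_iff.mp (by omega)
    rw [hv, Function.iterate_fixed T.parent_root]

theorem Ancestor.depth_lt (h : T.Ancestor u v) (hne : u ≠ v) : T.depth u < T.depth v :=
  h.depth_le.lt_of_ne fun hd => hne (h.eq_of_depth_eq hd)

theorem Ancestor.antisymm (huv : T.Ancestor u v) (hvu : T.Ancestor v u) : u = v :=
  huv.eq_of_depth_eq (huv.depth_le.antisymm hvu.depth_le)

theorem not_ancestor_parent (hv : v ≠ T.root) : ¬ T.Ancestor v (T.parent v) := fun h => by
  have := h.depth_le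
  have := depth_parent hv
  omega

end Ancestor

section Choose

variable {T} {u v w x y : V}

theorem lastBorn_parent_spec (hv : v ≠ T.root) :
    T.lastBorn (T.parent v) ≠ T.parent v ∧ T.parent (T.lastBorn (T.parent v)) = T.parent v :=
  T.lastBorn_spec _ ⟨v, fun h => hv (T.parent_eq_self v h.symm), rfl⟩

theorem parent_lastBorn_parent (hv : v ≠ T.root) :
    T.parent (T.lastBorn (T.parent v)) = T.parent v :=
  (lastBorn_parent_spec hv).2

theorem depth_lastBorn_parent (hv : v ≠ T.root) :
    T.depth (T.lastBorn (T.parent v)) = T.depth v := by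
  obtain ⟨hne, hparent⟩ := lastBorn_parent_spec hv
  have hb : T.lastBorn (T.parent v) ≠ T.root := fun hb => by
    rw [hb, T.parent_root] at hparent
    exact hne (hb.trans hparent)
  rw [← depth_parent hb, hparent, depth_parent hv]

theorem exists_mem_iff_ancestor_of_isChain {a : V} {l : List V}
    (hl : List.IsChain (fun a b => T.parent b = a) (a :: l)) :
    ∃ e, ∀ x, x ∈ a :: l ↔ T.Ancestor a x ∧ T.Ancestor x e := by
  induction l generalizing a with
  | nil =>
    refine ⟨a, fun x => ⟨fun hx => ?_, fun hx => List.mem_singleton.mpr (hx.2.antisymm hx.1)⟩⟩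
    rw [List.mem_singleton.mp hx]
    exact ⟨.refl a, .refl a⟩
  | cons c l ih =>
    rw [List.isChain_cons_cons] at hl
    obtain ⟨hca, hl⟩ := hl
    obtain ⟨e, he⟩ := ih hl
    have hac : T.Ancestor a c := hca ▸ ancestor_parent c
    refine ⟨e, fun x => ⟨?_, fun ⟨hax, hxe⟩ => ?_⟩⟩
    · rintro (_ | ⟨_, hx⟩)
      · exact ⟨.refl a, hac.trans ((he c).mp List.mem_cons_self).2⟩
      · exact ⟨hac.trans ((he x).mp hx).1, ((he x).mp hx).2⟩
    · have hce : T.Ancestor c e := ((he c).mp List.mem_cons_self).2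
      rcases hxe.total hce with hxc | hcx
      · rcases hxc.eq_or_ancestor_parent with rfl | hxa
        · exact List.mem_cons_of_mem a List.mem_cons_self
        · rw [hca] at hxa
          rw [hxa.antisymm hax]
          exact List.mem_cons_self
      · exact List.mem_cons_of_mem a ((he x).mpr ⟨hcx, hxe⟩)

theorem ne_root_of_mem_choose (hw : w ∈ T.choose v) : v ≠ T.root := fun h => by
  simp [T.choose_empty v (Or.inl h)] at hw

theorem ne_lastBorn_of_mem_choose (hw : w ∈ T.choose v) : v ≠ T.lastBorn (T.parent v) :=
  fun h => by simp [T.choose_empty v (Or.inr h)] at hw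

theorem exists_mem_choose_iff_ancestor (hw : w ∈ T.choose v) :
    ∃ e, ∀ x, x ∈ T.choose v ↔ T.Ancestor (T.lastBorn (T.parent v)) x ∧ T.Ancestor x e := by
  obtain ⟨l, hhead, hl, hchoose⟩ :=
    T.choose_branch v (ne_root_of_mem_choose hw) (ne_lastBorn_of_mem_choose hw)
  rw [hchoose] at hw ⊢
  obtain ⟨a, l, rfl⟩ := List.exists_cons_of_ne_nil (List.ne_nil_of_mem hw)
  obtain rfl : a = T.lastBorn (T.parent v) := by simpa using hhead
  exact exists_mem_iff_ancestor_of_isChain hl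

theorem ancestor_of_mem_choose (hw : w ∈ T.choose v) :
    T.Ancestor (T.lastBorn (T.parent v)) w := by
  obtain ⟨e, he⟩ := exists_mem_choose_iff_ancestor hw
  exact ((he w).mp hw).1

theorem mem_choose_of_ancestor_of_ancestor (hw : w ∈ T.choose v)
    (hx : T.Ancestor (T.lastBorn (T.parent v)) x) (hxw : T.Ancestor x w) : x ∈ T.choose v := by
  obtain ⟨e, he⟩ := exists_mem_choose_iff_ancestor hw
  exact (he x).mpr ⟨hx, hxw.trans ((he w).mp hw).2⟩

theorem ancestor_total_of_mem_choose (hw : w ∈ T.choose v) (hy : y ∈ T.choose v) :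
    T.Ancestor w y ∨ T.Ancestor y w := by
  obtain ⟨e, he⟩ := exists_mem_choose_iff_ancestor hw
  exact ((he w).mp hw).2.total ((he y).mp hy).2

theorem ancestor_of_mem_choose_of_ancestor_parent (hx : T.Ancestor x (T.parent v))
    (hw : w ∈ T.choose v) : T.Ancestor x w := by
  rw [← parent_lastBorn_parent (ne_root_of_mem_choose hw)] at hx
  exact hx.of_parent.trans (ancestor_of_mem_choose hw)

theorem mem_choose_or_ancestor_of_ancestor (hxv : T.Ancestor x v) (hw : w ∈ T.choose v) :
    w ∈ T.choose x ∨ T.Ancestor x w := by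
  rcases hxv.eq_or_ancestor_parent with rfl | hx
  · exact Or.inl hw
  · exact Or.inr (ancestor_of_mem_choose_of_ancestor_parent hx hw)

theorem mem_choose_or_ancestor_parent (hw : w ∈ T.choose v) (hxw : T.Ancestor x w) :
    x ∈ T.choose v ∨ T.Ancestor x (T.parent v) := by
  have hb := ancestor_of_mem_choose hw
  rcases hb.total hxw with hbx | hxb
  · exact Or.inl (mem_choose_of_ancestor_of_ancestor hw hbx hxw)
  rcases hxb.eq_or_ancestor_parent with rfl | hx
  · exact Or.inl (mem_choose_of_ancestor_of_ancestor hw (.refl _) hxw)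
  · rw [parent_lastBorn_parent (ne_root_of_mem_choose hw)] at hx
    exact Or.inr hx

end Choose

section Rank

-- Last-borns rank just above their siblings: a vertex then ranks below every vertex it chooses.
open Classical in
noncomputable def rank (v : V) : ℕ :=
  2 * T.depth v + if v = T.lastBorn (T.parent v) then 1 else 0

variable {T} {u v w d : V}

theorem rank_lt_of_mem_choose (hw : w ∈ T.choose u) : T.rank u < T.rank w := by
  have hu := ne_root_of_mem_choose hw
  have hb := ancestor_of_mem_choose hw
  have hdepth := depth_lastBorn_parent hu
  unfold rank
  rcases hb.depth_le.eq_or_lt with heq | hlt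
  · obtain rfl := hb.eq_of_depth_eq heq
    rw [if_neg (ne_lastBorn_of_mem_choose hw), if_pos (by rw [parent_lastBorn_parent hu])]
    omega
  · split_ifs <;> omega

theorem rank_lt_of_ancestor (h : T.Ancestor v d) (hne : v ≠ d) : T.rank v < T.rank d := by
  have := h.depth_lt hne
  unfold rank
  split_ifs <;> omega

end Rank

structure IsUnchosenLeafIn (S : Set V) (v : V) : Prop where
  not_mem_choose : ∀ u ∈ S, v ∉ T.choose u
  eq_of_ancestor : ∀ d ∈ S, T.Ancestor v d → d = v

theorem exists_isUnchosenLeafIn {S : Set V} (hfin : S.Finite) (hne : S.Nonempty) :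
    ∃ v ∈ S, T.IsUnchosenLeafIn S v := by
  set A := {a ∈ S | ∀ u ∈ S, a ∉ T.choose u}
  have hA : A.Nonempty := by
    obtain ⟨v₀, hv₀, hmin⟩ := S.exists_min_image T.rank hfin hne
    exact ⟨v₀, hv₀, fun u hu hv₀u => (rank_lt_of_mem_choose hv₀u).not_ge (hmin u hu)⟩
  obtain ⟨v, ⟨hvS, hv⟩, hmax⟩ := A.exists_max_image T.rank (hfin.subset fun _ h => h.1) hA
  refine ⟨v, hvS, hv, fun d => ?_⟩
  induction hd : T.rank d using Nat.strong_induction_on generalizing d with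
  | _ n ih =>
  intro hdS hvd
  by_contra hdv
  have hrank := rank_lt_of_ancestor hvd (Ne.symm hdv)
  obtain ⟨u, huS, hdu⟩ : ∃ u ∈ S, d ∈ T.choose u := by
    by_contra! hunchosen
    exact (hmax d ⟨hdS, hunchosen⟩).not_gt hrank
  rcases mem_choose_or_ancestor_parent hdu hvd with hvu | hvu
  · exact hv u huS hvu
  · have hu := ih _ (hd ▸ rank_lt_of_mem_choose hdu) u rfl huS hvu.of_parent
    exact not_ancestor_parent (ne_root_of_mem_choose hdu) (hu ▸ hvu)

def Linked (u w : V) : Prop :=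
  w ∈ T.choose u ∨ u ∈ T.choose w ∨ T.Ancestor u w ∨ T.Ancestor w u

section ClosedNbhd

variable {T} {S : Set V} {v w x y : V}

theorem Linked.symm (h : T.Linked x y) : T.Linked y x := by
  unfold Linked at h ⊢
  tauto

theorem linked_of_mem_choose (h : y ∈ T.choose x) : T.Linked x y := Or.inl h

theorem linked_of_ancestor (h : T.Ancestor x y) : T.Linked x y := Or.inr (Or.inr (Or.inl h))

theorem mem_closedNbhdIn_iff : w ∈ T.closedNbhdIn S x ↔ w ∈ S ∧ T.Linked x w := by
  simp only [closedNbhdIn, CT, Set.mem_ofPred_eq, SimpleGraph.fromRel_adj]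
  refine and_congr_right fun _ => ⟨?_, fun h => ?_⟩
  · rintro (rfl | ⟨-, h | h⟩)
    · exact linked_of_ancestor (.refl w)
    · exact h
    · exact Linked.symm h
  · by_cases hwx : w = x
    · exact Or.inl hwx
    · exact Or.inr ⟨Ne.symm hwx, Or.inl h⟩

theorem Linked.of_ancestor (hxy : T.Ancestor x y) (h : T.Linked y w) : T.Linked x w := by
  rcases h with hw | hy | hyw | hwy
  · rcases mem_choose_or_ancestor_of_ancestor hxy hw with hw | hxw
    · exact linked_of_mem_choose hw
    · exact linked_of_ancestor hxw
  · rcases mem_choose_or_ancestor_parent hy hxy with hx | hxw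
    · exact (linked_of_mem_choose hx).symm
    · exact linked_of_ancestor hxw.of_parent
  · exact linked_of_ancestor (hxy.trans hyw)
  · rcases hwy.total hxy with hwx | hxw
    · exact (linked_of_ancestor hwx).symm
    · exact linked_of_ancestor hxw

theorem closedNbhdIn_subset_of_ancestor (hxy : T.Ancestor x y) :
    T.closedNbhdIn S y ⊆ T.closedNbhdIn S x := fun w hw => by
  rw [mem_closedNbhdIn_iff] at hw ⊢
  exact ⟨hw.1, hw.2.of_ancestor hxy⟩

theorem IsUnchosenLeafIn.mem_choose_or_ancestor (hv : T.IsUnchosenLeafIn S v)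
    (hx : x ∈ T.closedNbhdIn S v) : x ∈ T.choose v ∨ T.Ancestor x v := by
  obtain ⟨hxS, hx | hvx | hvx | hxv⟩ := mem_closedNbhdIn_iff.mp hx
  · exact Or.inl hx
  · exact absurd hvx (hv.not_mem_choose x hxS)
  · exact Or.inr (hv.eq_of_ancestor x hxS hvx ▸ .refl x)
  · exact Or.inr hxv

theorem IsUnchosenLeafIn.closedNbhdIn_subset (hv : T.IsUnchosenLeafIn S v)
    (hx : x ∈ T.closedNbhdIn S v) : T.closedNbhdIn S v ⊆ T.closedNbhdIn S x := by
  rcases hv.mem_choose_or_ancestor hx with hxv | hxv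
  · intro z hz
    refine mem_closedNbhdIn_iff.mpr ⟨hz.1, ?_⟩
    rcases hv.mem_choose_or_ancestor hz with hzv | hzv
    · rcases ancestor_total_of_mem_choose hxv hzv with hxz | hzx
      · exact linked_of_ancestor hxz
      · exact (linked_of_ancestor hzx).symm
    · rcases mem_choose_or_ancestor_of_ancestor hzv hxv with hxz | hzx
      · exact (linked_of_mem_choose hxz).symm
      · exact (linked_of_ancestor hzx).symm
  · exact closedNbhdIn_subset_of_ancestor hxv

theorem IsUnchosenLeafIn.ancestor_total (hv : T.IsUnchosenLeafIn S v)
    (hx : x ∈ T.closedNbhdIn S v) (hy : y ∈ T.closedNbhdIn S v) :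
    x = v ∨ y = v ∨ T.Ancestor x y ∨ T.Ancestor y x := by
  rcases hv.mem_choose_or_ancestor hx with hxv | hxv <;>
    rcases hv.mem_choose_or_ancestor hy with hyv | hyv
  · exact Or.inr (Or.inr (ancestor_total_of_mem_choose hxv hyv))
  · rcases hyv.eq_or_ancestor_parent with rfl | hyv
    · exact Or.inr (Or.inl rfl)
    · exact Or.inr (Or.inr (Or.inr (ancestor_of_mem_choose_of_ancestor_parent hyv hxv)))
  · rcases hxv.eq_or_ancestor_parent with rfl | hxv
    · exact Or.inl rfl
    · exact Or.inr (Or.inr (Or.inl (ancestor_of_mem_choose_of_ancestor_parent hxv hyv)))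
  · exact Or.inr (Or.inr (hxv.total hyv))

theorem IsUnchosenLeafIn.closedNbhdIn_total (hv : T.IsUnchosenLeafIn S v) :
    ∀ x ∈ T.closedNbhdIn S v, ∀ y ∈ T.closedNbhdIn S v,
      T.closedNbhdIn S x ⊆ T.closedNbhdIn S y ∨ T.closedNbhdIn S y ⊆ T.closedNbhdIn S x := by
  intro x hx y hy
  rcases hv.ancestor_total hx hy with rfl | rfl | hxy | hyx
  · exact Or.inl (hv.closedNbhdIn_subset hy)
  · exact Or.inr (hv.closedNbhdIn_subset hx)
  · exact Or.inr (closedNbhdIn_subset_of_ancestor hxy)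
  · exact Or.inl (closedNbhdIn_subset_of_ancestor hyx)

end ClosedNbhd

end BurlingTree

/-- Every graph `C(T)` of a Burling tree is strongly chordal: by Farber's
characterization, every (nonempty) induced subgraph `C(T)[S]` contains a simple vertex,
i.e. a vertex `v` such that the closed neighborhoods (within `S`) of the vertices of
`N_S[v]` are totally ordered by inclusion. -/
theorem burling_CT_strongly_chordal {V : Type*} [Fintype V] (T : BurlingTree V)
    (S : Set V) (hS : S.Nonempty) :
    ∃ v ∈ S, ∀ x ∈ T.closedNbhdIn S v, ∀ y ∈ T.closedNbhdIn S v,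
      T.closedNbhdIn S x ⊆ T.closedNbhdIn S y ∨ T.closedNbhdIn S y ⊆ T.closedNbhdIn S x := by
  obtain ⟨v, hvS, hv⟩ := T.exists_isUnchosenLeafIn S.toFinite hS
  exact ⟨v, hvS, hv.closedNbhdIn_total⟩
end
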